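/- Define sets of terms N, N_plus, N_app inductively: d, e ∈ N; N_plus ∪ N_app ⊆ N; if t ∈ N and t ≠ e then d·t ∈ N_app; if n ≥ 2 and t_1,…,t_n ∈ N_app ∪ {d} then the right-associated sum t_1 + (t_2 + ⋯ + (t_{n-1} + t_n)⋯) ∈ N_plus. Then N equals the set of normal forms of the rewrite system R. -/

import Mathlib

/-- Ground terms over constants d, e with binary operations + (add) and · (app). -/
inductive Tm : Type
  | d : Tm
  | e : Tm
  | add : Tm → Tm → Tm
  | app : Tm → Tm → Tm
  deriving DecidableEq

open Tm

/-- Root rewrite steps: instances of the oriented rules. -/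
inductive Root : Tm → Tm → Prop
  | addE (x) : Root (add x e) x
  | eAdd (x) : Root (add e x) x
  | assoc (x y z) : Root (add (add x y) z) (add x (add y z))
  | appAdd (x y z) : Root (app (add x y) z) (app y (app x z))
  | appD (x y) : Root (app (app d x) y) (app x (add y x))
  | appE (x) : Root (app e x) x
  | dE : Root (app d e) e

/-- One rewrite step: a root step applied at some subterm position. -/
inductive Step : Tm → Tm → Prop
  | root {t u} : Root t u → Step t u
  | addL {t t' u} : Step t t' → Step (add t u) (add t' u)
  | addR {t u u'} : Step u u' → Step (add t u) (add t u')
  | appL {t t' u} : Step t t' → Step (app t u) (app t' u)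
  | appR {t u u'} : Step u u' → Step (app t u) (app t u')

/-- Zero or more rewrite steps. -/
def Steps : Tm → Tm → Prop := Relation.ReflTransGen Step

/-- A normal form is a term to which no rule applies. -/
def NormalForm (t : Tm) : Prop := ∀ u, ¬ Step t u

/-- Provable equality in the equational theory (reflexive symmetric transitive
congruence closure of the rule instances). -/
def TermEq : Tm → Tm → Prop := Relation.EqvGen Step

mutual
  /-- N: the candidate set of normal forms. -/
  inductive N : Tm → Prop
    | d : N d
    | e : N e
    | ofApp {t} : Napp t → N t
    | ofPlus {t} : Nplus t → N t

  /-- Atoms for sums: elements of N_app together with d. -/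
  inductive NAtom : Tm → Prop
    | d : NAtom d
    | ofApp {t} : Napp t → NAtom t

  /-- N_app: terms d·t with t ∈ N, t ≠ e. -/
  inductive Napp : Tm → Prop
    | mk {t} : N t → t ≠ e → Napp (app d t)

  /-- N_plus: right-associated sums of at least two atoms from N_app ∪ {d}. -/
  inductive Nplus : Tm → Prop
    | two {a b} : NAtom a → NAtom b → Nplus (add a b)
    | cons {a b} : NAtom a → Nplus b → Nplus (add a b)
end

/-!
Both sides are determined by the same local constraints on a term and its immediate
subterms: `a + b` is in `N` (resp. normal) iff `a` and `b` are, neither is `e` and `a` is not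
itself a sum; `a · b` is in `N` (resp. normal) iff `a = d`, `b` is and `b ≠ e`.
Structural induction then identifies the two sets.
-/

theorem NAtom.toN {t : Tm} : NAtom t → N t
  | .d => N.d
  | .ofApp h => N.ofApp h

theorem NAtom.ne_e {t : Tm} : NAtom t → t ≠ e
  | .d => nofun
  | .ofApp (.mk _ _) => nofun

theorem NAtom.ne_add {t : Tm} : NAtom t → ∀ x y, t ≠ add x y
  | .d => nofun
  | .ofApp (.mk _ _) => nofun

theorem Nplus.ne_e {t : Tm} : Nplus t → t ≠ e
  | .two _ _ => nofun
  | .cons _ _ => nofun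

theorem NAtom.of_N {t : Tm} (h : N t) (he : t ≠ e) (hadd : ∀ x y, t ≠ add x y) : NAtom t := by
  cases h with
  | d => exact NAtom.d
  | e => exact absurd rfl he
  | ofApp h => exact NAtom.ofApp h
  | ofPlus h => cases h <;> exact absurd rfl (hadd _ _)

theorem NAtom.or_Nplus_of_N {t : Tm} (h : N t) (he : t ≠ e) : NAtom t ∨ Nplus t := by
  cases h with
  | d => exact Or.inl NAtom.d
  | e => exact absurd rfl he
  | ofApp h => exact Or.inl (NAtom.ofApp h)
  | ofPlus h => exact Or.inr h

theorem N_add_iff {a b : Tm} :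
    N (add a b) ↔ N a ∧ N b ∧ a ≠ e ∧ b ≠ e ∧ ∀ x y, a ≠ add x y := by
  constructor
  · intro h
    obtain ⟨ha, hb⟩ : NAtom a ∧ (NAtom b ∨ Nplus b) := by
      cases h with
      | ofApp h => cases h
      | ofPlus h =>
        cases h with
        | two ha hb => exact ⟨ha, Or.inl hb⟩
        | cons ha hb => exact ⟨ha, Or.inr hb⟩
    refine ⟨ha.toN, ?_, ha.ne_e, ?_, ha.ne_add⟩
    · exact hb.elim NAtom.toN N.ofPlus
    · exact hb.elim NAtom.ne_e Nplus.ne_e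
  · rintro ⟨ha, hb, hae, hbe, hadd⟩
    have hA := NAtom.of_N ha hae hadd
    rcases NAtom.or_Nplus_of_N hb hbe with hB | hB
    · exact N.ofPlus (Nplus.two hA hB)
    · exact N.ofPlus (Nplus.cons hA hB)

theorem N_app_iff {a b : Tm} : N (app a b) ↔ a = d ∧ N b ∧ b ≠ e := by
  constructor
  · intro h
    cases h with
    | ofApp h => cases h with | mk hb hbe => exact ⟨rfl, hb, hbe⟩
    | ofPlus h => cases h
  · rintro ⟨rfl, hb, hbe⟩
    exact N.ofApp (Napp.mk hb hbe)

theorem normalForm_d : NormalForm d := by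
  rintro u (⟨⟨⟩⟩)

theorem normalForm_e : NormalForm e := by
  rintro u (⟨⟨⟩⟩)

theorem NormalForm.add_left {a b : Tm} (h : NormalForm (add a b)) : NormalForm a :=
  fun _ hs => h _ (Step.addL hs)

theorem NormalForm.add_right {a b : Tm} (h : NormalForm (add a b)) : NormalForm b :=
  fun _ hs => h _ (Step.addR hs)

theorem NormalForm.app_left {a b : Tm} (h : NormalForm (app a b)) : NormalForm a :=
  fun _ hs => h _ (Step.appL hs)

theorem NormalForm.app_right {a b : Tm} (h : NormalForm (app a b)) : NormalForm b :=
  fun _ hs => h _ (Step.appR hs)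

theorem NormalForm.eq_d_of_app {a b : Tm} (h : NormalForm (app a b)) : a = d := by
  induction a generalizing b with
  | d => rfl
  | e => exact absurd (Step.root (Root.appE b)) (h _)
  | add x y => exact absurd (Step.root (Root.appAdd x y b)) (h _)
  | app x y ihx _ =>
    obtain rfl := ihx h.app_left
    exact absurd (Step.root (Root.appD y b)) (h _)

theorem normalForm_add_iff {a b : Tm} :
    NormalForm (add a b) ↔
      NormalForm a ∧ NormalForm b ∧ a ≠ e ∧ b ≠ e ∧ ∀ x y, a ≠ add x y := by
  constructor
  · intro h
    refine ⟨h.add_left, h.add_right, ?_, ?_, ?_⟩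
    · rintro rfl; exact h _ (Step.root (Root.eAdd b))
    · rintro rfl; exact h _ (Step.root (Root.addE a))
    · rintro x y rfl; exact h _ (Step.root (Root.assoc x y b))
  · rintro ⟨ha, hb, hae, hbe, hadd⟩ u hs
    cases hs with
    | root r =>
      cases r with
      | addE => exact hbe rfl
      | eAdd => exact hae rfl
      | assoc x y => exact hadd x y rfl
    | addL hs => exact ha _ hs
    | addR hs => exact hb _ hs

theorem normalForm_app_iff {a b : Tm} : NormalForm (app a b) ↔ a = d ∧ NormalForm b ∧ b ≠ e := by
  constructor
  · intro h
    refine ⟨h.eq_d_of_app, h.app_right, ?_⟩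
    obtain rfl := h.eq_d_of_app
    rintro rfl
    exact h _ (Step.root Root.dE)
  · rintro ⟨rfl, hb, hbe⟩ u hs
    cases hs with
    | root r => cases r with | dE => exact hbe rfl
    | appL hs => exact normalForm_d _ hs
    | appR hs => exact hb _ hs

/-- N is exactly the set of normal forms of R. -/
theorem N_eq_normal_forms : ∀ t : Tm, N t ↔ NormalForm t := by
  intro t
  induction t with
  | d => exact ⟨fun _ => normalForm_d, fun _ => N.d⟩
  | e => exact ⟨fun _ => normalForm_e, fun _ => N.e⟩
  | add a b iha ihb => rw [N_add_iff, normalForm_add_iff, iha, ihb]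
  | app a b _ ihb => rw [N_app_iff, normalForm_app_iff, ihb]
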